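/- arXiv:2508.08195 — 3 statements merged into one kernel-verified Lean document; each statement's English description precedes it below -/
import Mathlib

section
/- For maps f, g : K → L between finite simplicial complexes, f is ∞-homotopic (Grandis homotopic) to g if and only if f is ×-homotopic to g. -/
/-- An (abstract) simplicial complex: a vertex type together with a collection of
finite subsets (faces) closed under taking subsets. -/
structure Cpx : Type 1 where
  V : Type
  faces : Set (Set V)
  finite_mem : ∀ σ ∈ faces, σ.Finite
  down : ∀ σ ∈ faces, ∀ τ ⊆ σ, τ ∈ faces

/-- A map of simplicial complexes: a vertex function sending faces to faces. -/
structure CpxHom (K L : Cpx) where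
  f : K.V → L.V
  map_face : ∀ σ ∈ K.faces, f '' σ ∈ L.faces

/-- Composition of maps of simplicial complexes. -/
def CpxHom.comp {K L M : Cpx} (g : CpxHom L M) (h : CpxHom K L) : CpxHom K M where
  f := g.f ∘ h.f
  map_face := fun σ hσ => by
    rw [Set.image_comp]
    exact g.map_face _ (h.map_face _ hσ)

/-- The path complex `I_n` on vertices `{0, …, n}` with edges `{i, i+1}`. -/
def pathCpx (n : ℕ) : Cpx where
  V := Fin (n + 1)
  faces := {σ | σ.Finite ∧ ∀ a ∈ σ, ∀ b ∈ σ, (a : ℕ) ≤ (b : ℕ) + 1}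
  finite_mem := fun _ hσ => hσ.1
  down := fun σ hσ τ hτ => ⟨hσ.1.subset hτ, fun a ha b hb => hσ.2 a (hτ ha) b (hτ hb)⟩

/-- The product of simplicial complexes: a finite set is a face iff both projections
are faces. -/
def prodCpx (K L : Cpx) : Cpx where
  V := K.V × L.V
  faces := {S | S.Finite ∧ Prod.fst '' S ∈ K.faces ∧ Prod.snd '' S ∈ L.faces}
  finite_mem := fun _ hS => hS.1
  down := fun S hS T hT =>
    ⟨hS.1.subset hT, K.down _ hS.2.1 _ (Set.image_mono hT),
      L.down _ hS.2.2 _ (Set.image_mono hT)⟩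

/-- `f` and `g` are `n`-homotopic: there is a map `H : K × I_n → L` with
`H(-,0) = f` and `H(-,n) = g`. -/
def NHomotopic {K L : Cpx} (n : ℕ) (f g : CpxHom K L) : Prop :=
  ∃ H : CpxHom (prodCpx K (pathCpx n)) L,
    (∀ x : K.V, H.f (x, (0 : Fin (n + 1))) = f.f x) ∧
    (∀ x : K.V, H.f (x, Fin.last n) = g.f x)

/-- `f` and `g` are `×`-homotopic: `n`-homotopic for some `n ≥ 1`. -/
def XHomotopic {K L : Cpx} (f g : CpxHom K L) : Prop :=
  ∃ n, 1 ≤ n ∧ NHomotopic n f g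

/-- The infinite path complex `I_∞` with vertex set `ℤ` and edges `{i, i+1}`. -/
def intPathCpx : Cpx where
  V := ℤ
  faces := {σ | σ.Finite ∧ ∀ a ∈ σ, ∀ b ∈ σ, a ≤ b + 1}
  finite_mem := fun _ hσ => hσ.1
  down := fun σ hσ τ hτ => ⟨hσ.1.subset hτ, fun a ha b hb => hσ.2 a (hτ ha) b (hτ hb)⟩

/-- `f` and `g` are `∞`-homotopic (Grandis homotopic): there is a map
`H : K × I_∞ → L` which is, for each vertex `x`, eventually constant on both sides,
starting at `f x` and ending at `g x`. -/
def GrandisHomotopic {K L : Cpx} (f g : CpxHom K L) : Prop :=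
  ∃ H : CpxHom (prodCpx K intPathCpx) L,
    ∀ x : K.V, ∃ Nm Np : ℤ, Nm ≤ Np ∧
      (∀ m : ℤ, m ≤ Nm → H.f (x, m) = H.f (x, Nm)) ∧
      (∀ m : ℤ, Np ≤ m → H.f (x, m) = H.f (x, Np)) ∧
      H.f (x, Nm) = f.f x ∧ H.f (x, Np) = g.f x

/-!
An `I_∞`-homotopy between maps out of a finite complex stabilises, on every vertex, outside
one common window `[M, M + n]`, so restricting it to that window gives an `I_n`-homotopy.
Conversely an `I_n`-homotopy extends to `I_∞` by precomposing with the clamp `ℤ → {0, …, n}`,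
which is simplicial and constant below `0` and above `n`.
-/

def CpxHom.id (K : Cpx) : CpxHom K K where
  f := fun x => x
  map_face := fun σ hσ => by simpa using hσ

def CpxHom.prodMap {K K' L L' : Cpx} (φ : CpxHom K K') (ψ : CpxHom L L') :
    CpxHom (prodCpx K L) (prodCpx K' L') where
  f := Prod.map φ.f ψ.f
  map_face := by
    rintro S ⟨hS, hS₁, hS₂⟩
    refine ⟨hS.image _, ?_, ?_⟩
    · have hfst : Prod.fst '' (Prod.map φ.f ψ.f '' S) = φ.f '' (Prod.fst '' S) :=
        (Set.image_image _ _ _).trans (Set.image_image φ.f Prod.fst S).symm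
      exact (congrArg (· ∈ K'.faces) hfst).mpr (φ.map_face _ hS₁)
    · have hsnd : Prod.snd '' (Prod.map φ.f ψ.f '' S) = ψ.f '' (Prod.snd '' S) :=
        (Set.image_image _ _ _).trans (Set.image_image ψ.f Prod.snd S).symm
      exact (congrArg (· ∈ L'.faces) hsnd).mpr (ψ.map_face _ hS₂)

def pathShift (n : ℕ) (M : ℤ) : CpxHom (pathCpx n) intPathCpx where
  f := fun k : Fin (n + 1) => M + (k : ℤ)
  map_face := by
    rintro σ ⟨hσ, hedge⟩
    refine ⟨hσ.image _, ?_⟩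
    rintro _ ⟨(a : Fin (n + 1)), ha, rfl⟩ _ ⟨(b : Fin (n + 1)), hb, rfl⟩
    have := hedge a ha b hb
    change M + (a : ℤ) ≤ M + (b : ℤ) + 1
    omega

def pathClamp (n : ℕ) : CpxHom intPathCpx (pathCpx n) where
  f := fun m : ℤ => ⟨min m.toNat n, by omega⟩
  map_face := by
    rintro σ ⟨hσ, hedge⟩
    refine ⟨hσ.image _, ?_⟩
    rintro _ ⟨a, ha, rfl⟩ _ ⟨b, hb, rfl⟩
    have := hedge a ha b hb
    change min a.toNat n ≤ min b.toNat n + 1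
    omega

theorem pathClamp_apply_of_nonpos (n : ℕ) {m : ℤ} (hm : m ≤ 0) :
    (pathClamp n).f m = (0 : Fin (n + 1)) :=
  Fin.ext (show min m.toNat n = 0 by omega)

theorem pathClamp_apply_of_le (n : ℕ) {m : ℤ} (hm : (n : ℤ) ≤ m) :
    (pathClamp n).f m = Fin.last n :=
  Fin.ext (show min m.toNat n = n by omega)

section

variable {K L : Cpx} {f g : CpxHom K L}

theorem GrandisHomotopic.exists_uniform_bounds [Finite K.V] (h : GrandisHomotopic f g) :
    ∃ H : CpxHom (prodCpx K intPathCpx) L, ∃ M N : ℤ, ∀ x : K.V,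
      (∀ m ≤ M, H.f (x, m) = f.f x) ∧ (∀ m, N ≤ m → H.f (x, m) = g.f x) := by
  obtain ⟨H, hH⟩ := h
  choose Nm Np _ hbelow habove hstart hend using hH
  obtain ⟨M, hM⟩ := (Set.finite_range Nm).bddBelow
  obtain ⟨N, hN⟩ := (Set.finite_range Np).bddAbove
  refine ⟨H, M, N, fun x => ⟨fun m hm => ?_, fun m hm => ?_⟩⟩
  · have hMx : M ≤ Nm x := hM (Set.mem_range_self x)
    rw [hbelow x m (hm.trans hMx), hstart]
  · have hNx : Np x ≤ N := hN (Set.mem_range_self x)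
    rw [habove x m (hNx.trans hm), hend]

theorem nHomotopic_of_intPath (H : CpxHom (prodCpx K intPathCpx) L) (M : ℤ) (n : ℕ)
    (hf : ∀ x, H.f (x, M) = f.f x) (hg : ∀ x, H.f (x, (M + n : ℤ)) = g.f x) :
    NHomotopic n f g := by
  refine ⟨H.comp ((CpxHom.id K).prodMap (pathShift n M)), fun x => ?_, fun x => ?_⟩
  · show H.f (x, M + (((0 : Fin (n + 1)) : ℕ) : ℤ)) = f.f x
    simpa using hf x
  · show H.f (x, M + (((Fin.last n : Fin (n + 1)) : ℕ) : ℤ)) = g.f x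
    simpa using hg x

theorem NHomotopic.grandisHomotopic {n : ℕ} (h : NHomotopic n f g) : GrandisHomotopic f g := by
  obtain ⟨H, h0, hn⟩ := h
  let G := H.comp ((CpxHom.id K).prodMap (pathClamp n))
  have hbelow : ∀ x, ∀ m : ℤ, m ≤ 0 → G.f (x, m) = f.f x := fun x m hm =>
    (congrArg (fun k => H.f (x, k)) (pathClamp_apply_of_nonpos n hm)).trans (h0 x)
  have habove : ∀ x, ∀ m : ℤ, n ≤ m → G.f (x, m) = g.f x := fun x m hm =>
    (congrArg (fun k => H.f (x, k)) (pathClamp_apply_of_le n hm)).trans (hn x)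
  exact ⟨G, fun x => ⟨0, n, Int.natCast_nonneg n,
    fun m hm => (hbelow x m hm).trans (hbelow x 0 le_rfl).symm,
    fun m hm => (habove x m hm).trans (habove x n le_rfl).symm,
    hbelow x 0 le_rfl, habove x n le_rfl⟩⟩

end

theorem grandisHomotopic_iff_xHomotopic_general {K L : Cpx} [Finite K.V]
    (f g : CpxHom K L) : GrandisHomotopic f g ↔ XHomotopic f g := by
  constructor
  · intro h
    obtain ⟨H, M, N, hH⟩ := h.exists_uniform_bounds
    refine ⟨max (N - M).toNat 1, le_max_right _ _, nHomotopic_of_intPath H M _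
      (fun x => (hH x).1 M le_rfl) (fun x => (hH x).2 _ ?_)⟩
    omega
  · rintro ⟨n, -, h⟩
    exact h.grandisHomotopic

/-- For maps between finite simplicial complexes, `∞`-homotopic (Grandis homotopic)
is equivalent to `×`-homotopic. -/
theorem grandisHomotopic_iff_xHomotopic {K L : Cpx} [Finite K.V] [Finite L.V]
    (f g : CpxHom K L) : GrandisHomotopic f g ↔ XHomotopic f g :=
  grandisHomotopic_iff_xHomotopic_general f g
end

section
/- For reflexive graphs G and H, the clique complex of the internal hom graph is isomorphic to the internal hom of the clique complexes: Cℓ(H^G) ≅ Cℓ(H)^{Cℓ(G)}. Explicitly, for vertex functions f_0,...,f_n : V(G) → V(H) (each a graph homomorphism vertex map), the set {f_0,...,f_n} is a simplex of Cℓ(H)^{Cℓ(G)} iff the f_i are pairwise adjacent in H^G. -/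
/-- A reflexive graph: a symmetric, reflexive adjacency relation on a vertex
type. -/
structure RGraph where
  V : Type
  Adj : V → V → Prop
  symm : ∀ x y, Adj x y → Adj y x
  refl : ∀ x, Adj x x

/-- Adjacency in the internal hom graph `H^G`: `f` and `f'` are adjacent iff for
every edge `x y` of `G` (including loops), `f x` and `f' y` are adjacent in `H`. -/
def RGraph.homAdj (G H : RGraph) (f f' : G.V → H.V) : Prop :=
  ∀ x y : G.V, G.Adj x y → H.Adj (f x) (f' y)

/-- The clique complex of a reflexive graph: faces are the finite sets of pairwise
adjacent vertices. -/
def cliqueCpx (G : RGraph) : Cpx where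
  V := G.V
  faces := {σ | σ.Finite ∧ ∀ a ∈ σ, ∀ b ∈ σ, G.Adj a b}
  finite_mem := fun _ h => h.1
  down := fun σ hσ τ hτ => ⟨hσ.1.subset hτ, fun a ha b hb => hσ.2 a (hτ ha) b (hτ hb)⟩

/-- The internal hom of simplicial complexes `L^K`: vertices are all vertex
functions, and a finite set `S` of functions is a face iff for every listing
`x_0, …, x_n` of a face of `K` (vertices possibly repeated) and every choice
`f_0, …, f_n` of elements of `S`, the set `{f_0 x_0, …, f_n x_n}` is a face of
`L`. -/
def ihomCpx (K L : Cpx) : Cpx where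
  V := K.V → L.V
  faces := {S | S.Finite ∧ ∀ (n : ℕ) (xs : Fin (n + 1) → K.V)
      (fs : Fin (n + 1) → (K.V → L.V)),
      Set.range xs ∈ K.faces → (∀ i, fs i ∈ S) →
      Set.range (fun i => fs i (xs i)) ∈ L.faces}
  finite_mem := fun _ h => h.1
  down := fun S hS T hT =>
    ⟨hS.1.subset hT, fun n xs fs hxs hfs => hS.2 n xs fs hxs fun i => hT (hfs i)⟩

theorem range_mem_cliqueCpx_faces_iff {G : RGraph} {ι : Type*} [Finite ι] (v : ι → G.V) :
    Set.range v ∈ (cliqueCpx G).faces ↔ ∀ i j, G.Adj (v i) (v j) := by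
  show (Set.range v).Finite ∧ (∀ a ∈ Set.range v, ∀ b ∈ Set.range v, G.Adj a b) ↔ _
  simp only [Set.finite_range, Set.forall_mem_range, true_and]

theorem range_pair_mem_cliqueCpx_faces {G : RGraph} {x y : G.V} (hxy : G.Adj x y) :
    Set.range ![x, y] ∈ (cliqueCpx G).faces :=
  (range_mem_cliqueCpx_faces_iff _).2 <| by
    simp [Fin.forall_fin_two, G.refl, hxy, G.symm x y hxy]

/-- For reflexive graphs `G` and `H`, the clique complex of the internal hom graph
`H^G` agrees with the internal hom of the clique complexes: a set of vertex
functions is a face of `Cℓ(H)^{Cℓ(G)}` iff it is finite and its elements are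
pairwise adjacent in `H^G`. -/
theorem cliqueCpx_ihom (G H : RGraph) (S : Set (G.V → H.V)) :
    S ∈ (ihomCpx (cliqueCpx G) (cliqueCpx H)).faces ↔
      (S.Finite ∧ ∀ f ∈ S, ∀ g ∈ S, RGraph.homAdj G H f g) := by
  refine and_congr_right fun _ => ⟨fun h f hf g hg x y hxy => ?_, fun h n xs fs hxs hfs => ?_⟩
  · have hfg := h 1 ![x, y] ![f, g] (range_pair_mem_cliqueCpx_faces hxy)
      (Fin.forall_fin_two.2 ⟨hf, hg⟩)
    exact (range_mem_cliqueCpx_faces_iff (G := H) _).1 hfg 0 1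
  · refine (range_mem_cliqueCpx_faces_iff (G := H) _).2 fun i j => ?_
    exact h _ (hfs i) _ (hfs j) _ _ ((range_mem_cliqueCpx_faces_iff xs).1 hxs i j)
end

section
/- If (L,K) and (M,L) are ×-NDR pairs of simplicial complexes (K ⊆ L ⊆ M), then (M,K) is an ×-NDR pair. In particular, for the deformation-retract witnesses A ⊆ L with n_L(K) ⊆ A and B ⊆ M with n_M(L) ⊆ B, one has n_M(K) ⊆ n_M(L) and the retraction s : B → L maps n_M(K) into n_L(K). -/
/-- `F` is (the face collection of) a simplicial complex on the vertex type `V`: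
every face is finite and the collection is closed under taking subsets. -/
def IsCpxOn {V : Type} (F : Set (Set V)) : Prop :=
  (∀ σ ∈ F, σ.Finite) ∧ ∀ σ ∈ F, ∀ τ ⊆ σ, τ ∈ F

/-- `F` is a flag complex: every finite nonempty vertex set all of whose pairs
are faces is itself a face. -/
def IsFlagOn {V : Type} (F : Set (Set V)) : Prop :=
  ∀ S : Set V, S.Finite → S.Nonempty →
    (∀ a ∈ S, ∀ b ∈ S, ({a, b} : Set V) ∈ F) → S ∈ F

/-- The closed star of a vertex `v` in the complex `F`. -/
def closedStar {V : Type} (F : Set (Set V)) (v : V) : Set (Set V) :=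
  {τ | τ ∈ F ∧ τ ∪ {v} ∈ F}

/-- The neighborhood of the subcomplex `K` in `L`: the union of the closed stars
in `L` of the vertices of `K`. -/
def nbhd {V : Type} (L K : Set (Set V)) : Set (Set V) :=
  {τ | ∃ v : V, ({v} : Set V) ∈ K ∧ τ ∈ closedStar L v}

/-- `f` sends faces of `F` to faces of `G`. -/
def MapsFaces {V : Type} (F G : Set (Set V)) (f : V → V) : Prop :=
  ∀ σ ∈ F, f '' σ ∈ G

/-- Faces of the path `I_n` on `{0, …, n}`. -/
def pathFace (n : ℕ) (s : Set ℕ) : Prop :=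
  (∀ i ∈ s, i ≤ n) ∧ ∀ a ∈ s, ∀ b ∈ s, a ≤ b + 1

/-- `K` is a ×-deformation retract of its supercomplex `B`: there is a retraction
`r : B → K` fixing the vertices of `K`, and for some `n ≥ 1` a homotopy
`H : B × I_n → B` from the identity to `r`, constant on `K`. -/
def IsXDefRetractOn {V : Type} (B K : Set (Set V)) : Prop :=
  K ⊆ B ∧ ∃ r : V → V, MapsFaces B K r ∧ (∀ x : V, ({x} : Set V) ∈ K → r x = x) ∧
    ∃ n, 1 ≤ n ∧ ∃ H : V → ℕ → V,
      (∀ S : Set (V × ℕ), S.Finite → Prod.fst '' S ∈ B →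
        pathFace n (Prod.snd '' S) → (fun p => H p.1 p.2) '' S ∈ B) ∧
      (∀ x : V, ({x} : Set V) ∈ B → H x 0 = x) ∧
      (∀ x : V, ({x} : Set V) ∈ B → H x n = r x) ∧
      (∀ x : V, ({x} : Set V) ∈ K → ∀ i ≤ n, H x i = x)

/-- `(M, K)` is a ×-NDR pair: there is a subcomplex `B ⊆ M` containing the
neighborhood of `K` in `M` such that `K` is a ×-deformation retract of `B`. -/
def IsXNDRPair {V : Type} (M K : Set (Set V)) : Prop :=
  K ⊆ M ∧ ∃ B : Set (Set V), IsCpxOn B ∧ B ⊆ M ∧ nbhd M K ⊆ B ∧ IsXDefRetractOn B K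

/-- vertices of a face are faces -/
lemma vert_mem {V : Type} {F : Set (Set V)} (hF : ∀ σ ∈ F, ∀ τ ⊆ σ, τ ∈ F)
    {σ : Set V} (hσ : σ ∈ F) {x : V} (hx : x ∈ σ) : ({x} : Set V) ∈ F :=
  hF σ hσ {x} (Set.singleton_subset_iff.2 hx)

lemma image_fix {V : Type} {f : V → V} {σ : Set V} (h : ∀ x ∈ σ, f x = x) :
    f '' σ = σ := by
  rw [Set.image_congr h, Set.image_id']

lemma image_union_fixed {V : Type} {f : V → V} {σ : Set V} {v : V} (h : f v = v) :
    f '' (σ ∪ {v}) = f '' σ ∪ {v} := by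
  rw [Set.image_union, Set.image_singleton, h]

/-- A ×-homotopy that is constant at a vertex `v` preserves the closed star of `v`. -/
lemma star_homotopy {V : Type} (A : Set (Set V)) (hA : ∀ σ ∈ A, ∀ τ ⊆ σ, τ ∈ A)
    (m : ℕ) (G : V → ℕ → V)
    (hG : ∀ S : Set (V × ℕ), S.Finite → Prod.fst '' S ∈ A →
      pathFace m (Prod.snd '' S) → (fun p => G p.1 p.2) '' S ∈ A)
    (v : V) (hv : ∀ i ≤ m, G v i = v)
    (S : Set (V × ℕ)) (hS : S.Finite) (hSne : S.Nonempty)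
    (h1 : Prod.fst '' S ∪ {v} ∈ A) (h2 : pathFace m (Prod.snd '' S)) :
    (fun p => G p.1 p.2) '' S ∈ A ∧ ((fun p => G p.1 p.2) '' S) ∪ {v} ∈ A := by
  have hfst : Prod.fst '' S ∈ A := hA _ h1 _ Set.subset_union_left
  refine ⟨hG S hS hfst h2, ?_⟩
  obtain ⟨p₀, hp₀⟩ := hSne
  have hk : p₀.2 ≤ m := h2.1 _ ⟨p₀, hp₀, rfl⟩
  have := hG (insert (v, p₀.2) S) (hS.insert _) ?_ ?_
  · have himg : (fun p : V × ℕ => G p.1 p.2) '' insert (v, p₀.2) S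
        = ((fun p : V × ℕ => G p.1 p.2) '' S) ∪ {v} := by
      rw [Set.image_insert_eq, hv _ hk, Set.union_comm, Set.singleton_union]
    rwa [himg] at this
  · have : Prod.fst '' insert (v, p₀.2) S = Prod.fst '' S ∪ {v} := by
      rw [Set.image_insert_eq, Set.union_comm, Set.singleton_union]
    rw [this]; exact h1
  · have : Prod.snd '' insert (v, p₀.2) S = Prod.snd '' S := by
      rw [Set.image_insert_eq, Set.insert_eq_self]
      exact ⟨p₀, hp₀, rfl⟩
    rw [this]; exact h2

/-- A ×-homotopy constant on the vertices of `K` maps faces of `nbhd A K ∪ K`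
into `nbhd A K ∪ K`. -/
lemma nbhdK_homotopy {V : Type} (A K : Set (Set V))
    (hA : ∀ σ ∈ A, ∀ τ ⊆ σ, τ ∈ A) (hKc : ∀ σ ∈ K, ∀ τ ⊆ σ, τ ∈ K)
    (n : ℕ) (H : V → ℕ → V)
    (hHface : ∀ S : Set (V × ℕ), S.Finite → Prod.fst '' S ∈ A →
      pathFace n (Prod.snd '' S) → (fun p => H p.1 p.2) '' S ∈ A)
    (hHK : ∀ x : V, ({x} : Set V) ∈ K → ∀ i ≤ n, H x i = x) :
    ∀ T : Set (V × ℕ), T.Finite → Prod.fst '' T ∈ nbhd A K ∪ K →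
      pathFace n (Prod.snd '' T) → (fun p => H p.1 p.2) '' T ∈ nbhd A K ∪ K := by
  intro T hT hfst hpath
  rcases T.eq_empty_or_nonempty with rfl | hTne
  · simpa using hfst
  rcases hfst with ⟨v, hvK, hstar⟩ | hfstK
  · obtain ⟨h1', h2'⟩ := star_homotopy A hA n H hHface v (hHK v hvK) T hT hTne hstar.2 hpath
    exact Or.inl ⟨v, hvK, h1', h2'⟩
  · right
    have : (fun p : V × ℕ => H p.1 p.2) '' T = Prod.fst '' T := by
      apply Set.image_congr
      intro p hp
      exact hHK p.1 (vert_mem hKc hfstK ⟨p, hp, rfl⟩) p.2 (hpath.1 _ ⟨p, hp, rfl⟩)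
    rw [this]; exact hfstK

/-- If `(L, K)` and `(M, L)` are ×-NDR pairs (with `K ⊆ L ⊆ M`), then `(M, K)` is
a ×-NDR pair. Moreover `n_M(K) ⊆ n_M(L)`, and any retraction `s : B → L` (for a
subcomplex `B` with `n_M(L) ⊆ B ⊆ M`) fixing `L` maps `n_M(K)` into `n_L(K)`. -/
theorem xNDRPair_trans {V : Type} (K L M : Set (Set V))
    (hK : IsCpxOn K) (hL : IsCpxOn L) (hM : IsCpxOn M)
    (hKL : K ⊆ L) (hLM : L ⊆ M)
    (h1 : IsXNDRPair L K) (h2 : IsXNDRPair M L) :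
    IsXNDRPair M K ∧
    nbhd M K ⊆ nbhd M L ∧
    (∀ B : Set (Set V), IsCpxOn B → nbhd M L ⊆ B → B ⊆ M →
      ∀ s : V → V, MapsFaces B L s → (∀ x : V, ({x} : Set V) ∈ L → s x = x) →
      ∀ σ ∈ nbhd M K, s '' σ ∈ nbhd L K) := by
  obtain ⟨hKL', A, hAcpx, hAL, hnA, hKA, r, hr, hrfix, n, hn1, H, hHface, hH0, hHn, hHK⟩ := h1
  obtain ⟨hLM', B, hBcpx, hBM, hnB, hLB, s, hs, hsfix, m, hm1, G, hGface, hG0, hGm, hGL⟩ := h2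
  -- part 2
  have part2 : nbhd M K ⊆ nbhd M L := by
    rintro σ ⟨v, hvK, hst⟩; exact ⟨v, hKL hvK, hst⟩
  -- part 3
  have part3 : ∀ B₀ : Set (Set V), IsCpxOn B₀ → nbhd M L ⊆ B₀ → B₀ ⊆ M →
      ∀ s₀ : V → V, MapsFaces B₀ L s₀ → (∀ x : V, ({x} : Set V) ∈ L → s₀ x = x) →
      ∀ σ ∈ nbhd M K, s₀ '' σ ∈ nbhd L K := by
    intro B₀ hB₀cpx hnb hB₀M s₀ hs₀ hfix σ hσ
    obtain ⟨v, hvK, hσM, hσvM⟩ := hσ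
    have hσvM' : (σ ∪ {v}) ∪ {v} ∈ M := by
      rw [Set.union_assoc, Set.union_self]; exact hσvM
    have hσvB : σ ∪ {v} ∈ B₀ := hnb ⟨v, hKL hvK, hσvM, hσvM'⟩
    have hσB : σ ∈ B₀ := hB₀cpx.2 _ hσvB σ Set.subset_union_left
    have hsv : s₀ v = v := hfix v (hKL hvK)
    refine ⟨v, hvK, hs₀ σ hσB, ?_⟩
    rw [← image_union_fixed hsv]; exact hs₀ _ hσvB
  refine ⟨?_, part2, part3⟩
  -- part 1
  set C : Set (Set V) := nbhd A K ∪ K with hC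
  set B' : Set (Set V) := nbhd B K ∪ K with hB'
  have hKB : K ⊆ B := fun σ h => hLB (hKL h)
  have hAB : A ⊆ B := fun σ h => hLB (hAL h)
  have hB'B : B' ⊆ B := by
    rintro σ (⟨v, _, hσ, _⟩ | hσ)
    · exact hσ
    · exact hKB hσ
  have hCA : C ⊆ A := by
    rintro σ (⟨v, _, hσ, _⟩ | hσ)
    · exact hσ
    · exact hKA hσ
  have hCB' : C ⊆ B' := by
    rintro σ (⟨v, hv, hσ1, hσ2⟩ | hσ)
    · exact Or.inl ⟨v, hv, hAB hσ1, hAB hσ2⟩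
    · exact Or.inr hσ
  have hB'cpx : IsCpxOn B' := by
    constructor
    · intro σ hσ; exact hBcpx.1 σ (hB'B hσ)
    · rintro σ (⟨v, hv, h1', h2'⟩ | hσK) τ hτ
      · exact Or.inl ⟨v, hv, hBcpx.2 _ h1' _ hτ, hBcpx.2 _ h2' _ (Set.union_subset_union_left _ hτ)⟩
      · exact Or.inr (hK.2 _ hσK _ hτ)
  have hnMK : nbhd M K ⊆ B' := by
    rintro σ ⟨v, hvK, hσM, hσvM⟩
    have hσvM' : (σ ∪ {v}) ∪ {v} ∈ M := by
      rw [Set.union_assoc, Set.union_self]; exact hσvM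
    have hB1 : σ ∪ {v} ∈ B := hnB ⟨v, hKL hvK, hσvM, hσvM'⟩
    have hB0 : σ ∈ B := hBcpx.2 _ hB1 σ Set.subset_union_left
    exact Or.inl ⟨v, hvK, hB0, hB1⟩
  -- s maps B' into C
  have hsC : ∀ σ ∈ B', s '' σ ∈ C := by
    rintro σ (⟨v, hvK, hσB, hσvB⟩ | hσK)
    · have hsv : s v = v := hsfix v (hKL hvK)
      have hL1 : s '' σ ∈ L := hs σ hσB
      have hL2 : s '' σ ∪ {v} ∈ L := by
        rw [← image_union_fixed hsv]; exact hs _ hσvB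
      have hL2' : (s '' σ ∪ {v}) ∪ {v} ∈ L := by
        rw [Set.union_assoc, Set.union_self]; exact hL2
      exact Or.inl ⟨v, hvK, hnA ⟨v, hvK, hL1, hL2⟩, hnA ⟨v, hvK, hL2, hL2'⟩⟩
    · right
      have : s '' σ = σ := image_fix (fun x hx => hsfix x (hKL (vert_mem hK.2 hσK hx)))
      rw [this]; exact hσK
  have hsx : ∀ x : V, ({x} : Set V) ∈ B' → ({s x} : Set V) ∈ A := by
    intro x hx
    have := hsC {x} hx
    rw [Set.image_singleton] at this
    exact hCA this
  -- the two neighborhood homotopy facts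
  have hGK : ∀ x : V, ({x} : Set V) ∈ K → ∀ i ≤ m, G x i = x :=
    fun x hx => hGL x (hKL hx)
  have f6' : ∀ S : Set (V × ℕ), S.Finite → Prod.fst '' S ∈ B' →
      pathFace m (Prod.snd '' S) → (fun p => G p.1 p.2) '' S ∈ B' :=
    nbhdK_homotopy B K hBcpx.2 hK.2 m G hGface hGK
  have f6 : ∀ T : Set (V × ℕ), T.Finite → Prod.fst '' T ∈ C →
      pathFace n (Prod.snd '' T) → (fun p => H p.1 p.2) '' T ∈ C :=
    nbhdK_homotopy A K hAcpx.2 hK.2 n H hHface hHK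
  refine ⟨fun σ h => hLM (hKL h), B', hB'cpx, fun σ h => hBM (hB'B h), hnMK,
    Set.subset_union_right, fun x => r (s x), ?_, ?_, m + n, by omega,
    fun x i => if i ≤ m then G x i else H (s x) (i - m), ?_, ?_, ?_, ?_⟩
  · -- retraction maps faces
    intro σ hσ
    have : (fun x => r (s x)) '' σ = r '' (s '' σ) := (Set.image_image r s σ).symm
    rw [this]
    exact hr _ (hCA (hsC σ hσ))
  · intro x hx; beta_reduce; rw [hsfix x (hKL hx), hrfix x hx]
  · -- homotopy face condition
    intro S hSfin hfst hpath
    by_cases hall : ∀ p ∈ S, p.2 ≤ m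
    · have heq : (fun p : V × ℕ => if p.2 ≤ m then G p.1 p.2 else H (s p.1) (p.2 - m)) '' S
          = (fun p : V × ℕ => G p.1 p.2) '' S :=
        Set.image_congr (fun p hp => if_pos (hall p hp))
      rw [heq]
      refine f6' S hSfin hfst ⟨?_, hpath.2⟩
      rintro i ⟨p, hp, rfl⟩
      exact hall p hp
    · push_neg at hall
      obtain ⟨p₀, hp₀S, hp₀⟩ := hall
      have hge : ∀ p ∈ S, m ≤ p.2 := by
        intro p hp
        have := hpath.2 p₀.2 ⟨p₀, hp₀S, rfl⟩ p.2 ⟨p, hp, rfl⟩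
        omega
      have hcong : ∀ p ∈ S,
          (if p.2 ≤ m then G p.1 p.2 else H (s p.1) (p.2 - m)) = H (s p.1) (p.2 - m) := by
        intro p hp
        by_cases h : p.2 ≤ m
        · have hpm : p.2 = m := le_antisymm h (hge p hp)
          have hxB' : ({p.1} : Set V) ∈ B' :=
            vert_mem hB'cpx.2 hfst ⟨p, hp, rfl⟩
          rw [if_pos h, hpm, Nat.sub_self, hGm p.1 (hB'B hxB'), hH0 (s p.1) (hsx p.1 hxB')]
        · rw [if_neg h]
      have himg : (fun p : V × ℕ => if p.2 ≤ m then G p.1 p.2 else H (s p.1) (p.2 - m)) '' S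
          = (fun p : V × ℕ => H p.1 p.2) '' ((fun p : V × ℕ => (s p.1, p.2 - m)) '' S) := by
        rw [Set.image_image]
        exact Set.image_congr hcong
      rw [himg]
      apply hCB'
      refine f6 _ (hSfin.image _) ?_ ⟨?_, ?_⟩
      · have : Prod.fst '' ((fun p : V × ℕ => (s p.1, p.2 - m)) '' S)
            = s '' (Prod.fst '' S) := by
          rw [Set.image_image, Set.image_image]
        rw [this]
        exact hsC _ hfst
      · rintro i ⟨t, ⟨p, hp, rfl⟩, rfl⟩
        have := hpath.1 p.2 ⟨p, hp, rfl⟩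
        simp only
        omega
      · rintro a ⟨t, ⟨p, hp, rfl⟩, rfl⟩ b ⟨t', ⟨q, hq, rfl⟩, rfl⟩
        have h1' := hpath.2 p.2 ⟨p, hp, rfl⟩ q.2 ⟨q, hq, rfl⟩
        have h2' := hge q hq
        simp only
        omega
  · -- H' x 0 = x
    intro x hx
    beta_reduce
    rw [if_pos (Nat.zero_le m)]
    exact hG0 x (hB'B hx)
  · -- H' x (m+n) = r (s x)
    intro x hx
    beta_reduce
    rw [if_neg (by omega : ¬ m + n ≤ m), Nat.add_sub_cancel_left]
    exact hHn (s x) (hsx x hx)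
  · -- constant on K
    intro x hx i hi
    beta_reduce
    by_cases h : i ≤ m
    · rw [if_pos h]; exact hGL x (hKL hx) i h
    · rw [if_neg h, hsfix x (hKL hx)]
      exact hHK x hx (i - m) (by omega)
end
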